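/- arXiv:1107.0233 — 2 statements merged into one kernel-verified Lean document; each statement's English description precedes it below -/
import Mathlib

section
/- Suppose q ≤ μ and fix ε ∈ ℝ. There exists a unique continuously differentiable function g : (−∞, ε) → (0, ∞) satisfying g'(s) = 1 − Z(g(s))/(q·W(g(s))) for all s < ε, lim_{s↑ε} g(s) = 0 and lim_{s→−∞} g(s) = +∞. (Brownian-motion instance of Lemma 3.1 in the case q ≤ ψ(1), where k* = ∞.) -/
open Real Filter Set MeasureTheory

noncomputable def dlt (σ μ q : ℝ) : ℝ := Real.sqrt ((μ / σ ^ 2 - 1 / 2) ^ 2 + 2 * q / σ ^ 2)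

noncomputable def gma (σ μ : ℝ) : ℝ := 1 / 2 - μ / σ ^ 2

noncomputable def gma1 (σ μ q : ℝ) : ℝ := gma σ μ - dlt σ μ q

noncomputable def gma2 (σ μ q : ℝ) : ℝ := gma σ μ + dlt σ μ q

/-- The scale function `W^{(q)}` of `X_t = (μ - σ²/2) t + σ B_t`. -/
noncomputable def W (σ μ q : ℝ) (x : ℝ) : ℝ :=
  if 0 ≤ x then 2 / (σ ^ 2 * dlt σ μ q) * Real.exp (gma σ μ * x) * Real.sinh (dlt σ μ q * x)
  else 0

/-- The scale function `Z^{(q)}` of `X_t = (μ - σ²/2) t + σ B_t`. -/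
noncomputable def Z (σ μ q : ℝ) (x : ℝ) : ℝ :=
  if 0 ≤ x then
    Real.exp (gma σ μ * x) * Real.cosh (dlt σ μ q * x)
      - gma σ μ / dlt σ μ q * Real.exp (gma σ μ * x) * Real.sinh (dlt σ μ q * x)
  else 1

/-- `k* = (γ₂ - γ₁)⁻¹ log((1 - 1/γ₁)/(1 - 1/γ₂))`. -/
noncomputable def kstar (σ μ q : ℝ) : ℝ :=
  (gma2 σ μ q - gma1 σ μ q)⁻¹ *
    Real.log ((1 - 1 / gma1 σ μ q) / (1 - 1 / gma2 σ μ q))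

/-!
For `x > 0` one has `1 - Z(x)/(q W(x)) = -1/φ(x)` with `φ = q W/(Z - q W)`, and the assumption
`q ≤ ψ(1) = μ` makes `φ` continuous, vanishing at `0` and strictly increasing. The equation
`g' = -1/φ(g)` is separable: for a primitive `F` of `φ`, `F(g(s)) + s` is constant, and the boundary
condition at `ε` forces `F(g(s)) = ε - s`. As `φ` is bounded below on `[1, ∞)`, `F` maps `[0, ∞)`
increasingly onto `[0, ∞)`, so `g = F⁻¹(ε - ·)` is the solution, and the only one.
-/

open scoped Topology

def IsODESolution (R : ℝ → ℝ) (ε : ℝ) (g : ℝ → ℝ) : Prop :=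
  (∀ s ∈ Iio ε, g s ∈ Ioi (0 : ℝ)) ∧
    ContDiffOn ℝ 1 g (Iio ε) ∧
    (∀ s ∈ Iio ε, HasDerivAt g (R (g s)) s) ∧
    Tendsto g (𝓝[<] ε) (𝓝 0) ∧
    Tendsto g atBot atTop

section Autonomous

variable {e : ℝ ≃o ℝ} {φ R : ℝ → ℝ}

theorem isODESolution_orderIso_symm_const_sub (he0 : e 0 = 0)
    (he : ∀ x, 0 < x → HasDerivAt e (φ x) x) (hφ : ContinuousOn φ (Ioi 0))
    (hφ0 : ∀ x, 0 < x → φ x ≠ 0) (hR : ∀ x, 0 < x → R x = -(φ x)⁻¹) (ε : ℝ) :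
    IsODESolution R ε (fun s => e.symm (ε - s)) := by
  set g : ℝ → ℝ := fun s => e.symm (ε - s)
  have hg : Continuous g := e.symm.continuous.comp (continuous_sub_left ε)
  have hsymm0 : e.symm 0 = 0 := by rw [e.symm_apply_eq, he0]
  have hpos : ∀ s ∈ Iio ε, 0 < g s := fun s (hs : s < ε) => by
    rw [← hsymm0]
    exact e.symm.strictMono (sub_pos.2 hs)
  have hderiv : ∀ s ∈ Iio ε, HasDerivAt g (R (g s)) s := fun s hs => by
    have hinv : HasDerivAt e.symm (φ (g s))⁻¹ (ε - s) :=
      HasDerivAt.of_local_left_inverse e.symm.continuous.continuousAt (he _ (hpos s hs))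
        (hφ0 _ (hpos s hs)) (.of_forall e.apply_symm_apply)
    rw [hR _ (hpos s hs), ← mul_neg_one]
    exact hinv.comp s ((hasDerivAt_id' s).const_sub ε)
  refine ⟨hpos, ?_, hderiv, ?_, ?_⟩
  · rw [show (1 : WithTop ℕ∞) = 0 + 1 from rfl, contDiffOn_succ_iff_deriv_of_isOpen isOpen_Iio]
    refine ⟨fun s hs => (hderiv s hs).differentiableAt.differentiableWithinAt, by simp, ?_⟩
    rw [contDiffOn_zero]
    refine ContinuousOn.congr (f := fun s => -(φ (g s))⁻¹) ?_ fun s hs => by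
      rw [(hderiv s hs).deriv, hR _ (hpos s hs)]
    exact ((hφ.comp hg.continuousOn fun s hs => hpos s hs).inv₀ fun s hs =>
      hφ0 _ (hpos s hs)).neg
  · have : Tendsto (fun s => ε - s) (𝓝[<] ε) (𝓝 0) := by
      simpa using ((continuous_sub_left ε).tendsto ε).mono_left nhdsWithin_le_nhds
    rw [← hsymm0]
    exact (e.symm.continuous.tendsto 0).comp this
  · exact e.symm.monotone.tendsto_atTop_atTop (fun b => ⟨e b, by simp⟩) |>.comp
      (tendsto_atTop_add_const_left _ ε tendsto_neg_atBot_atTop |>.congr fun s => by ring)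

theorem IsODESolution.apply_eq_sub {ε : ℝ} {g : ℝ → ℝ} (hg : IsODESolution R ε g)
    (he0 : e 0 = 0) (he : ∀ x, 0 < x → HasDerivAt e (φ x) x)
    (hφ0 : ∀ x, 0 < x → φ x ≠ 0) (hR : ∀ x, 0 < x → R x = -(φ x)⁻¹) {s : ℝ} (hs : s < ε) :
    e (g s) = ε - s := by
  obtain ⟨hpos, -, hderiv, hlim, -⟩ := hg
  have hconst : ∀ t ∈ Iio ε, HasDerivAt (fun t => e (g t) + t) 0 t := fun t ht => by
    have h := ((he _ (hpos t ht)).comp t (hderiv t ht)).add (hasDerivAt_id t)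
    rwa [hR _ (hpos t ht), mul_neg, mul_inv_cancel₀ (hφ0 _ (hpos t ht)), neg_add_cancel] at h
  have heq : ∀ t ∈ Iio ε, e (g t) + t = e (g s) + s := fun t ht =>
    isOpen_Iio.is_const_of_deriv_eq_zero isPreconnected_Iio
      (fun u hu => (hconst u hu).differentiableAt.differentiableWithinAt)
      (fun u hu => (hconst u hu).deriv) ht hs
  have hlim' : Tendsto (fun t => e (g t) + t) (𝓝[<] ε) (𝓝 (0 + ε)) := by
    rw [← he0]
    exact ((e.continuous.tendsto 0).comp hlim).add (tendsto_id.mono_left nhdsWithin_le_nhds)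
  have := tendsto_nhds_unique (tendsto_const_nhds.congr' (eventually_nhdsWithin_of_forall
    fun t ht => (heq t ht).symm)) hlim'
  linarith

theorem existsUnique_isODESolution (he0 : e 0 = 0)
    (he : ∀ x, 0 < x → HasDerivAt e (φ x) x) (hφ : ContinuousOn φ (Ioi 0))
    (hφ0 : ∀ x, 0 < x → φ x ≠ 0) (hR : ∀ x, 0 < x → R x = -(φ x)⁻¹) (ε : ℝ) :
    ∃ g, IsODESolution R ε g ∧ ∀ g', IsODESolution R ε g' → EqOn g' g (Iio ε) :=
  ⟨_, isODESolution_orderIso_symm_const_sub he0 he hφ hφ0 hR ε, fun _ hg' _ hs =>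
    e.eq_symm_apply.2 (hg'.apply_eq_sub he0 he hφ0 hR hs)⟩

end Autonomous

section Primitive

variable {φ : ℝ → ℝ}

theorem tendsto_intervalIntegral_atTop_of_le (hφ : Continuous φ) {a c : ℝ} (hc : 0 < c)
    (hle : ∀ x, a ≤ x → c ≤ φ x) : Tendsto (fun x => ∫ t in (0 : ℝ)..x, φ t) atTop atTop := by
  have hbound : ∀ x, a ≤ x → (∫ t in (0 : ℝ)..a, φ t) + c * (x - a) ≤ ∫ t in (0 : ℝ)..x, φ t :=
    fun x hx => by
      rw [← intervalIntegral.integral_add_adjacent_intervals (hφ.intervalIntegrable 0 a)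
        (hφ.intervalIntegrable a x)]
      gcongr
      simpa [mul_comm] using intervalIntegral.integral_mono_on hx
        (intervalIntegrable_const (μ := volume)) (hφ.intervalIntegrable a x) fun t ht => hle t ht.1
  refine tendsto_atTop_mono' _ (eventually_atTop.2 ⟨a, hbound⟩) ?_
  exact tendsto_atTop_add_const_left _ _
    ((tendsto_atTop_add_const_right _ (-a) tendsto_id).const_mul_atTop hc)

theorem exists_orderIso_hasDerivAt (hφ : Continuous φ) (hpos : ∀ x, 0 < x → 0 < φ x)
    (htop : Tendsto (fun x => ∫ t in (0 : ℝ)..x, φ t) atTop atTop) :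
    ∃ e : ℝ ≃o ℝ, e 0 = 0 ∧ ∀ x, 0 < x → HasDerivAt e (φ x) x := by
  set F : ℝ → ℝ := fun x => ∫ t in (0 : ℝ)..x, φ t
  have hF : ∀ x, HasDerivAt F (φ x) x := fun x =>
    (hφ.integral_hasStrictDerivAt 0 x).hasDerivAt
  have hFc : Continuous F := continuous_iff_continuousAt.2 fun x => (hF x).continuousAt
  have hFmono : StrictMonoOn F (Ici 0) :=
    strictMonoOn_of_hasDerivWithinAt_pos (convex_Ici 0) hFc.continuousOn
      (fun x _ => (hF x).hasDerivWithinAt) fun x hx => hpos x (by simpa using hx)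
  have hF0 : F 0 = 0 := intervalIntegral.integral_same
  set G : ℝ → ℝ := fun x => if 0 ≤ x then F x else x
  have hGmono : StrictMono G := by
    intro x y hxy
    by_cases hx : 0 ≤ x
    · simpa [G, hx, hx.trans hxy.le] using hFmono hx (hx.trans hxy.le) hxy
    by_cases hy : 0 ≤ y
    · simpa [G, hx, hy] using (not_le.1 hx).trans_le (hF0 ▸ hFmono.monotoneOn self_mem_Ici hy hy)
    · simpa [G, hx, hy] using hxy
  have hGc : Continuous G :=
    Continuous.if_le hFc continuous_id continuous_const continuous_id fun x hx => by
      simp [← hx, hF0]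
  have hGsurj : Function.Surjective G :=
    hGc.surjective (htop.congr' (eventually_atTop.2 ⟨0, fun x hx => by simp [G, hx]⟩))
      (tendsto_id.congr' (eventually_atBot.2 ⟨-1, fun x hx => by
        simp [G, not_le.2 (hx.trans_lt (by norm_num : (-1 : ℝ) < 0))]⟩))
  refine ⟨hGmono.orderIsoOfSurjective G hGsurj, by simp [G, hF0], fun x hx => ?_⟩
  exact (hF x).congr_of_eventuallyEq <| Filter.mem_of_superset (Ioi_mem_nhds hx) fun y hy => by
    simp [G, le_of_lt (show 0 < y from hy)]

end Primitive

/-- On `x ≥ 0` this is `q W(x) / (Z(x) - q W(x))`, with numerator and denominator multiplied by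
`2 δ e^{(δ - γ) x}`, which makes the denominator visibly positive on all of `ℝ` when `q ≤ μ`. -/
noncomputable def scaleRatio (σ μ q x : ℝ) : ℝ :=
  2 * q / σ ^ 2 * (exp (2 * dlt σ μ q * x) - 1) /
    ((dlt σ μ q - (gma σ μ + 2 * q / σ ^ 2)) * exp (2 * dlt σ μ q * x)
      + (dlt σ μ q + (gma σ μ + 2 * q / σ ^ 2)))

section BrownianScale

variable {σ μ q : ℝ}

local notation "δ" => dlt σ μ q
local notation "γ" => gma σ μ

theorem dlt_sq (hq : 0 ≤ q) : δ ^ 2 = γ ^ 2 + 2 * q / σ ^ 2 := by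
  rw [dlt, sq_sqrt (by positivity), gma]
  ring

theorem abs_gma_lt_dlt (hσ : σ ≠ 0) (hq : 0 < q) : |γ| < δ := by
  have : 0 < 2 * q / σ ^ 2 := by positivity
  exact abs_lt_of_sq_lt_sq (by rw [dlt_sq hq.le]; linarith) (sqrt_nonneg _)

theorem dlt_add_gma_le_one (hσ : σ ≠ 0) (hq : 0 < q) (hqμ : q ≤ μ) : δ + γ ≤ 1 := by
  have h1γ : 0 ≤ 1 - γ := by
    have : 0 ≤ μ / σ ^ 2 := div_nonneg (hq.trans_le hqμ).le (sq_nonneg σ)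
    rw [gma]; linarith
  have hsq : δ ^ 2 ≤ (1 - γ) ^ 2 := by
    have : (1 - γ) ^ 2 - δ ^ 2 = 2 * (μ - q) / σ ^ 2 := by
      rw [dlt_sq hq.le, gma]; field_simp; ring
    have : 0 ≤ 2 * (μ - q) / σ ^ 2 := div_nonneg (by linarith) (sq_nonneg σ)
    linarith
  linarith [le_of_sq_le_sq hsq h1γ]

theorem gma_add_le_dlt (hσ : σ ≠ 0) (hq : 0 < q) (hqμ : q ≤ μ) : γ + 2 * q / σ ^ 2 ≤ δ := by
  have h := abs_lt.1 (abs_gma_lt_dlt hσ hq (μ := μ))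
  have : δ - (γ + 2 * q / σ ^ 2) = (δ - γ) * (1 - (δ + γ)) := by
    linear_combination (dlt_sq (σ := σ) (μ := μ) hq.le)
  nlinarith [dlt_add_gma_le_one hσ hq hqμ]

theorem neg_dlt_lt_gma_add (hσ : σ ≠ 0) (hq : 0 < q) : -δ < γ + 2 * q / σ ^ 2 := by
  have := (abs_lt.1 (abs_gma_lt_dlt hσ hq (μ := μ))).1
  have : 0 < 2 * q / σ ^ 2 := by positivity
  linarith

theorem scaleRatio_den_pos (hσ : σ ≠ 0) (hq : 0 < q) (hqμ : q ≤ μ) {y : ℝ} (hy : 0 ≤ y) :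
    0 < (δ - (γ + 2 * q / σ ^ 2)) * y + (δ + (γ + 2 * q / σ ^ 2)) := by
  have := mul_nonneg (sub_nonneg.2 (gma_add_le_dlt hσ hq hqμ)) hy
  linarith [neg_dlt_lt_gma_add hσ hq (μ := μ)]

theorem continuous_scaleRatio (hσ : σ ≠ 0) (hq : 0 < q) (hqμ : q ≤ μ) :
    Continuous (scaleRatio σ μ q) := by
  unfold scaleRatio
  exact Continuous.div (by fun_prop) (by fun_prop) fun x =>
    (scaleRatio_den_pos hσ hq hqμ (exp_pos _).le).ne'

theorem strictMono_scaleRatio (hσ : σ ≠ 0) (hq : 0 < q) (hqμ : q ≤ μ) :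
    StrictMono (scaleRatio σ μ q) := by
  intro x x' hxx'
  have hδ : 0 < δ := (abs_nonneg _).trans_lt (abs_gma_lt_dlt hσ hq)
  have hy : exp (2 * δ * x) < exp (2 * δ * x') := exp_lt_exp.2 (by gcongr)
  have hb : 0 < 2 * q / σ ^ 2 := by positivity
  unfold scaleRatio
  rw [div_lt_div_iff₀ (scaleRatio_den_pos hσ hq hqμ (exp_pos _).le)
    (scaleRatio_den_pos hσ hq hqμ (exp_pos _).le)]
  -- the two cross products differ by `2 q/σ² · 2δ · (y' - y)`
  nlinarith [mul_pos (mul_pos hb hδ) (sub_pos.2 hy)]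

theorem scaleRatio_pos (hσ : σ ≠ 0) (hq : 0 < q) (hqμ : q ≤ μ) {x : ℝ} (hx : 0 < x) :
    0 < scaleRatio σ μ q x := by
  simpa [scaleRatio] using strictMono_scaleRatio hσ hq hqμ hx

theorem one_sub_Z_div_W (hσ : σ ≠ 0) (hq : 0 < q) (hqμ : q ≤ μ) {x : ℝ} (hx : 0 < x) :
    1 - Z σ μ q x / (q * W σ μ q x) = -(scaleRatio σ μ q x)⁻¹ := by
  have hδ : 0 < δ := (abs_nonneg _).trans_lt (abs_gma_lt_dlt hσ hq)
  have hE : 1 < exp (δ * x) := one_lt_exp_iff.2 (by positivity)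
  have hden := scaleRatio_den_pos hσ hq hqμ (exp_pos (2 * δ * x)).le
  have hE2 : exp (2 * δ * x) = exp (δ * x) ^ 2 := by rw [sq, ← exp_add]; ring_nf
  rw [hE2] at hden
  rw [Z, W, if_pos hx.le, if_pos hx.le, scaleRatio, cosh_eq, sinh_eq, exp_neg, hE2]
  set E := exp (δ * x)
  have : E ^ 2 - 1 ≠ 0 := by nlinarith
  field_simp
  ring

end BrownianScale

theorem stmt_13 (σ μ q ε : ℝ) (hσ : 0 < σ) (hq : 0 < q) (hqμ : q ≤ μ) :
    ∃ g : ℝ → ℝ,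
      ((∀ s ∈ Set.Iio ε, g s ∈ Set.Ioi (0 : ℝ)) ∧
        ContDiffOn ℝ 1 g (Set.Iio ε) ∧
        (∀ s ∈ Set.Iio ε, HasDerivAt g (1 - Z σ μ q (g s) / (q * W σ μ q (g s))) s) ∧
        Filter.Tendsto g (nhdsWithin ε (Set.Iio ε)) (nhds 0) ∧
        Filter.Tendsto g Filter.atBot Filter.atTop) ∧
      ∀ g' : ℝ → ℝ,
        ((∀ s ∈ Set.Iio ε, g' s ∈ Set.Ioi (0 : ℝ)) ∧
          ContDiffOn ℝ 1 g' (Set.Iio ε) ∧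
          (∀ s ∈ Set.Iio ε, HasDerivAt g' (1 - Z σ μ q (g' s) / (q * W σ μ q (g' s))) s) ∧
          Filter.Tendsto g' (nhdsWithin ε (Set.Iio ε)) (nhds 0) ∧
          Filter.Tendsto g' Filter.atBot Filter.atTop) →
        Set.EqOn g' g (Set.Iio ε) := by
  have hσ : σ ≠ 0 := hσ.ne'
  have hφ := continuous_scaleRatio hσ hq hqμ
  have hpos : ∀ x, 0 < x → 0 < scaleRatio σ μ q x := fun x => scaleRatio_pos hσ hq hqμ
  obtain ⟨e, he0, he⟩ := exists_orderIso_hasDerivAt hφ hpos <|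
    tendsto_intervalIntegral_atTop_of_le hφ (hpos 1 one_pos) fun x hx =>
      (strictMono_scaleRatio hσ hq hqμ).monotone hx
  exact existsUnique_isODESolution (R := fun x => 1 - Z σ μ q x / (q * W σ μ q x)) he0 he
    hφ.continuousOn (fun x hx => (hpos x hx).ne') (fun x => one_sub_Z_div_W hσ hq hqμ) ε
end

section
/- Fix ε ∈ ℝ and let g be a differentiable function on (−∞, ε) satisfying g'(s) = 1 − Z(g(s))/(q·W(g(s))) for all s < ε. (i) If q > μ, g takes values in (0, k*) and lim_{s→−∞} g(s) = k*, then lim_{s→−∞} g'(s) = 0. (ii) If q ≤ μ, g takes values in (0, ∞) and lim_{s→−∞} g(s) = +∞, then lim_{s→−∞} g'(s) = 1 − 1/γ₂. -/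
open Real Filter Set MeasureTheory

/-! For `x > 0` put `u = e^{-2δx}`. Since `W(x) = (e^{γ₂x} - e^{γ₁x}) / (σ²δ)`,
`Z(x) = (γ₂ e^{γ₁x} - γ₁ e^{γ₂x}) / (2δ)` and `γ₁γ₂ = -2q/σ²`,
`Z(x) / (q W(x)) = (1/γ₂ - u/γ₁) / (1 - u)`.
This is continuous on `(0, ∞)`, tends to `1/γ₂` as `x → ∞`, and equals `1` at `k*`,
where `u = (1 - 1/γ₂) / (1 - 1/γ₁)`. Both limits follow by composing with `g`. -/

lemma dlt_pos {σ : ℝ} (μ : ℝ) {q : ℝ} (hσ : 0 < σ) (hq : 0 < q) : 0 < dlt σ μ q :=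
  Real.sqrt_pos.mpr (by positivity)

lemma gma1_mul_gma2 {σ : ℝ} (μ : ℝ) {q : ℝ} (hσ : 0 < σ) (hq : 0 ≤ q) :
    gma1 σ μ q * gma2 σ μ q = -(2 * q / σ ^ 2) := by
  have hδ : dlt σ μ q ^ 2 = (μ / σ ^ 2 - 1 / 2) ^ 2 + 2 * q / σ ^ 2 :=
    Real.sq_sqrt (by positivity)
  rw [gma1, gma2, gma]
  linear_combination -hδ

lemma gma2_pos {σ : ℝ} (μ : ℝ) {q : ℝ} (hσ : 0 < σ) (hq : 0 < q) : 0 < gma2 σ μ q := by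
  have hprod := gma1_mul_gma2 μ hσ hq.le
  have hδ := dlt_pos μ hσ hq
  have : 0 < 2 * q / σ ^ 2 := by positivity
  rw [gma1, gma2] at *
  nlinarith

lemma gma1_neg {σ : ℝ} (μ : ℝ) {q : ℝ} (hσ : 0 < σ) (hq : 0 < q) : gma1 σ μ q < 0 := by
  have hprod := gma1_mul_gma2 μ hσ hq.le
  have h₂ := gma2_pos μ hσ hq
  have : 0 < 2 * q / σ ^ 2 := by positivity
  nlinarith

lemma one_lt_gma2 {σ μ q : ℝ} (hσ : 0 < σ) (hμq : μ < q) : 1 < gma2 σ μ q := by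
  suffices 1 / 2 + μ / σ ^ 2 < dlt σ μ q by rw [gma2, gma]; linarith
  rcases lt_or_ge (1 / 2 + μ / σ ^ 2) 0 with hneg | hnonneg
  · exact hneg.trans_le (Real.sqrt_nonneg _)
  · rw [dlt, Real.lt_sqrt hnonneg]
    have : 0 < 2 * (q - μ) / σ ^ 2 := div_pos (by linarith) (by positivity)
    linear_combination this

lemma Z_div_W_eq {σ μ q x : ℝ} (hσ : 0 < σ) (hq : 0 < q) (hx : 0 < x) :
    Z σ μ q x / (q * W σ μ q x) =
      (1 / gma2 σ μ q - Real.exp (-(2 * dlt σ μ q * x)) / gma1 σ μ q) /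
        (1 - Real.exp (-(2 * dlt σ μ q * x))) := by
  have hδ := dlt_pos μ hσ hq
  have hprod : σ ^ 2 * (gma1 σ μ q * gma2 σ μ q) = -(2 * q) := by
    rw [gma1_mul_gma2 μ hσ hq.le]; field_simp
  have h₁ := (gma1_neg μ hσ hq).ne
  have h₂ := (gma2_pos μ hσ hq).ne'
  have hE : 1 < Real.exp (dlt σ μ q * x) := Real.one_lt_exp_iff.mpr (by positivity)
  have hu : Real.exp (-(2 * dlt σ μ q * x)) = (Real.exp (dlt σ μ q * x) ^ 2)⁻¹ := by
    rw [← Real.exp_nat_mul, ← Real.exp_neg]; ring_nf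
  rw [Z, W, if_pos hx.le, if_pos hx.le, Real.sinh_eq, Real.cosh_eq, Real.exp_neg, hu]
  rw [gma1, gma2] at *
  generalize Real.exp (dlt σ μ q * x) = E at *
  have : E ^ 2 - 1 ≠ 0 := by nlinarith
  field_simp
  linear_combination ((E ^ 2 + 1) * dlt σ μ q - gma σ μ * (E ^ 2 - 1)) * hprod

lemma tendsto_Z_div_W_atTop {σ μ q : ℝ} (hσ : 0 < σ) (hq : 0 < q) :
    Tendsto (fun x => Z σ μ q x / (q * W σ μ q x)) atTop (nhds (1 / gma2 σ μ q)) := by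
  have hu : Tendsto (fun x => Real.exp (-(2 * dlt σ μ q * x))) atTop (nhds 0) :=
    Real.tendsto_exp_atBot.comp <| tendsto_neg_atTop_atBot.comp <|
      tendsto_id.const_mul_atTop (by linarith [dlt_pos μ hσ hq])
  have hlim := ((tendsto_const_nhds (x := 1 / gma2 σ μ q)).sub (hu.div_const (gma1 σ μ q))).div
    (tendsto_const_nhds.sub hu) (by norm_num : (1 : ℝ) - 0 ≠ 0)
  rw [zero_div, sub_zero, sub_zero, div_one] at hlim
  refine hlim.congr' ?_
  filter_upwards [eventually_gt_atTop 0] with x hx using (Z_div_W_eq hσ hq hx).symm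

lemma continuousAt_Z_div_W {σ : ℝ} (μ : ℝ) {q x₀ : ℝ} (hσ : 0 < σ) (hq : 0 < q) (hx₀ : 0 < x₀) :
    ContinuousAt (fun x => Z σ μ q x / (q * W σ μ q x)) x₀ := by
  have hden : 1 - Real.exp (-(2 * dlt σ μ q * x₀)) ≠ 0 := by
    have : Real.exp (-(2 * dlt σ μ q * x₀)) < 1 :=
      Real.exp_lt_one_iff.mpr (by nlinarith [dlt_pos μ hσ hq])
    linarith
  have hformula : ContinuousAt (fun x => (1 / gma2 σ μ q - Real.exp (-(2 * dlt σ μ q * x)) /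
      gma1 σ μ q) / (1 - Real.exp (-(2 * dlt σ μ q * x)))) x₀ :=
    ContinuousAt.div (by fun_prop) (by fun_prop) hden
  refine hformula.congr ?_
  filter_upwards [eventually_gt_nhds hx₀] with x hx using (Z_div_W_eq hσ hq hx).symm

lemma one_sub_inv_gma2_pos {σ μ q : ℝ} (hσ : 0 < σ) (hμq : μ < q) :
    0 < 1 - 1 / gma2 σ μ q := by
  have h := one_lt_gma2 hσ hμq
  have : 1 / gma2 σ μ q < 1 := (div_lt_one (by linarith)).mpr h
  linarith

lemma one_sub_inv_gma2_lt_one_sub_inv_gma1 {σ : ℝ} (μ : ℝ) {q : ℝ} (hσ : 0 < σ) (hq : 0 < q) :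
    1 - 1 / gma2 σ μ q < 1 - 1 / gma1 σ μ q := by
  have : 1 / gma1 σ μ q < 0 := one_div_neg.mpr (gma1_neg μ hσ hq)
  have : 0 < 1 / gma2 σ μ q := one_div_pos.mpr (gma2_pos μ hσ hq)
  linarith

lemma kstar_pos {σ μ q : ℝ} (hσ : 0 < σ) (hq : 0 < q) (hμq : μ < q) : 0 < kstar σ μ q := by
  have hgap : 0 < gma2 σ μ q - gma1 σ μ q := by
    linarith [gma1_neg μ hσ hq, gma2_pos μ hσ hq]
  refine mul_pos (inv_pos.mpr hgap) (Real.log_pos ?_)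
  rw [one_lt_div (one_sub_inv_gma2_pos hσ hμq)]
  exact one_sub_inv_gma2_lt_one_sub_inv_gma1 μ hσ hq

lemma exp_neg_two_dlt_mul_kstar {σ μ q : ℝ} (hσ : 0 < σ) (hq : 0 < q) (hμq : μ < q) :
    Real.exp (-(2 * dlt σ μ q * kstar σ μ q)) = (1 - 1 / gma2 σ μ q) / (1 - 1 / gma1 σ μ q) := by
  have ha := one_sub_inv_gma2_pos hσ hμq
  have hab := one_sub_inv_gma2_lt_one_sub_inv_gma1 μ hσ hq
  have hδ := dlt_pos μ hσ hq
  have h2δ : gma2 σ μ q - gma1 σ μ q = 2 * dlt σ μ q := by rw [gma1, gma2]; ring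
  rw [kstar, h2δ, ← mul_assoc, mul_inv_cancel₀ (by positivity), one_mul, Real.exp_neg,
    Real.exp_log (div_pos (ha.trans hab) ha), inv_div]

lemma Z_div_W_kstar {σ μ q : ℝ} (hσ : 0 < σ) (hq : 0 < q) (hμq : μ < q) :
    Z σ μ q (kstar σ μ q) / (q * W σ μ q (kstar σ μ q)) = 1 := by
  have ha := one_sub_inv_gma2_pos hσ hμq
  have hab := one_sub_inv_gma2_lt_one_sub_inv_gma1 μ hσ hq
  have hb := ha.trans hab
  rw [Z_div_W_eq hσ hq (kstar_pos hσ hq hμq), exp_neg_two_dlt_mul_kstar hσ hq hμq,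
    div_eq_one_iff_eq (sub_pos.mpr ((div_lt_one hb).mpr hab)).ne']
  simp only [div_eq_mul_inv, one_mul] at *
  generalize (gma2 σ μ q)⁻¹ = r₂ at *
  generalize (gma1 σ μ q)⁻¹ = r₁ at *
  field_simp
  ring

theorem stmt_15_general (σ μ q ε : ℝ) (hσ : 0 < σ) (hq : 0 < q)
    (g : ℝ → ℝ) :
    ((μ < q ∧ (∀ s ∈ Set.Iio ε, g s ∈ Set.Ioo 0 (kstar σ μ q)) ∧
        Filter.Tendsto g Filter.atBot (nhds (kstar σ μ q))) →
      Filter.Tendsto (fun s => 1 - Z σ μ q (g s) / (q * W σ μ q (g s)))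
        Filter.atBot (nhds 0)) ∧
    ((q ≤ μ ∧ (∀ s ∈ Set.Iio ε, g s ∈ Set.Ioi (0 : ℝ)) ∧
        Filter.Tendsto g Filter.atBot Filter.atTop) →
      Filter.Tendsto (fun s => 1 - Z σ μ q (g s) / (q * W σ μ q (g s)))
        Filter.atBot (nhds (1 - 1 / gma2 σ μ q))) := by
  constructor
  · rintro ⟨hμq, -, hg⟩
    have hcont := continuousAt_Z_div_W μ hσ hq (kstar_pos hσ hq hμq)
    rw [ContinuousAt, Z_div_W_kstar hσ hq hμq] at hcont
    rw [← sub_self (1 : ℝ)]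
    exact (tendsto_const_nhds.sub hcont).comp hg
  · rintro ⟨-, -, hg⟩
    exact (tendsto_const_nhds.sub (tendsto_Z_div_W_atTop hσ hq)).comp hg

theorem stmt_15 (σ μ q ε : ℝ) (hσ : 0 < σ) (hq : 0 < q)
    (g : ℝ → ℝ)
    (hode : ∀ s ∈ Set.Iio ε, HasDerivAt g (1 - Z σ μ q (g s) / (q * W σ μ q (g s))) s) :
    ((μ < q ∧ (∀ s ∈ Set.Iio ε, g s ∈ Set.Ioo 0 (kstar σ μ q)) ∧
        Filter.Tendsto g Filter.atBot (nhds (kstar σ μ q))) →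
      Filter.Tendsto (fun s => 1 - Z σ μ q (g s) / (q * W σ μ q (g s)))
        Filter.atBot (nhds 0)) ∧
    ((q ≤ μ ∧ (∀ s ∈ Set.Iio ε, g s ∈ Set.Ioi (0 : ℝ)) ∧
        Filter.Tendsto g Filter.atBot Filter.atTop) →
      Filter.Tendsto (fun s => 1 - Z σ μ q (g s) / (q * W σ μ q (g s)))
        Filter.atBot (nhds (1 - 1 / gma2 σ μ q))) :=
  stmt_15_general σ μ q ε hσ hq g
end
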